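/- Let k̄ ∈ ℕ, C ∈ ℝ^{n_y×n}, and Φ ∈ ℝ^{n×n} invertible. For k = 0, 1, …, k̄, let ψ̃_k ∈ ℝ^{n_y} and let Ṽ_k ∈ ℝ^{n_y×n_y} be symmetric positive definite. Let Ō ∈ ℝ^{(k̄+1)n_y×n} be the vertical stacking of the matrices C Φ^{k−k̄} for k = 0, …, k̄, and assume rank(Ō) = n; let Ō† := (ŌᵀŌ)⁻¹Ōᵀ. Let ψ̄ ∈ ℝ^{(k̄+1)n_y} be the vertical stacking of the ψ̃_k, and let V̄ be the block-diagonal matrix whose k-th diagonal block is (k̄+1)·Ṽ_k. Then every ξ ∈ ℝ^n satisfying (C Φ^{k−k̄} ξ − ψ̃_k)ᵀ Ṽ_k⁻¹ (C Φ^{k−k̄} ξ − ψ̃_k) ≤ 1 for all k = 0, …, k̄ satisfies ξ ∈ E(Ō†ψ̄, Ō†V̄Ō†ᵀ), i.e., (ξ − Ō†ψ̄)ᵀ (Ō†V̄Ō†ᵀ)⁻¹ (ξ − Ō†ψ̄) ≤ 1. -/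

import Mathlib

open Matrix
open scoped ComplexOrder

/-!
Since `Ō` has full column rank, `Ō†` is a left inverse of `Ō`, so `ξ - Ō†ψ̄ = Ō†e` for the stacked
output residual `e = Ōξ - ψ̄`. For `V` positive definite and `A` of full row rank, both Schur
complements of `[[AVAᵀ, A], [Aᵀ, V⁻¹]]` are positive semidefinite (the one of `V⁻¹` is zero), so
`Aᵀ(AVAᵀ)⁻¹A ≤ V⁻¹`. Hence the left-hand side is at most `eᵀV̄⁻¹e`, which by block-diagonality is
the average over `k` of the left-hand sides of the `k̄ + 1` output constraints.
-/

namespace Matrix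

theorem mulVec_injective_of_rank_eq_card {m n K : Type*} [Fintype n] [Field K]
    (A : Matrix m n K) (h : A.rank = Fintype.card n) : Function.Injective A.mulVec := by
  classical
  have hker : Module.finrank K (LinearMap.ker A.mulVecLin) = 0 := by
    have := LinearMap.finrank_range_add_finrank_ker A.mulVecLin
    rw [← rank, h, Module.finrank_fintype_fun_eq_card] at this
    omega
  exact LinearMap.ker_eq_bot.mp (Submodule.finrank_eq_zero.mp hker)

variable {m n o R 𝕜 : Type*} [Fintype m] [Fintype n] [Fintype o]

theorem vecMul_injective_of_mul_eq_one [Semiring R] [DecidableEq m] {A : Matrix m n R}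
    {B : Matrix n m R} (h : A * B = 1) : Function.Injective A.vecMul :=
  Function.LeftInverse.injective (g := (· ᵥ* B)) fun x => by simp [vecMul_vecMul, h]

theorem PosDef.posSemidef_inv_sub_conjTranspose_mul_inv_mul [RCLike 𝕜] [DecidableEq m]
    [DecidableEq n] {V : Matrix n n 𝕜} (hV : V.PosDef) {A : Matrix m n 𝕜}
    (hA : Function.Injective A.vecMul) :
    (V⁻¹ - Aᴴ * (A * V * Aᴴ)⁻¹ * A).PosSemidef := by
  have hM := hV.mul_mul_conjTranspose_same hA
  have := hM.isUnit.invertible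
  have := hV.inv.isUnit.invertible
  rw [← PosDef.fromBlocks₁₁ A V⁻¹ hM, PosDef.fromBlocks₂₂ _ _ hV.inv,
    nonsing_inv_nonsing_inv V ((isUnit_iff_isUnit_det V).mp hV.isUnit), sub_self]
  exact .zero

theorem PosDef.dotProduct_inv_mulVec_le [DecidableEq m] [DecidableEq n] {V : Matrix n n ℝ}
    (hV : V.PosDef) {A : Matrix m n ℝ} (hA : Function.Injective A.vecMul) (e : n → ℝ) :
    (A *ᵥ e) ⬝ᵥ ((A * V * Aᵀ)⁻¹ *ᵥ (A *ᵥ e)) ≤ e ⬝ᵥ (V⁻¹ *ᵥ e) := by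
  have := (hV.posSemidef_inv_sub_conjTranspose_mul_inv_mul hA).dotProduct_mulVec_nonneg e
  rw [conjTranspose_eq_transpose_of_trivial, sub_mulVec, dotProduct_sub, star_trivial,
    ← mulVec_mulVec, ← mulVec_mulVec, dotProduct_mulVec e Aᵀ, vecMul_transpose] at this
  linarith

section BlockDiagonal

variable [DecidableEq o]

theorem blockDiagonal_mulVec_apply [NonUnitalNonAssocSemiring R] (B : o → Matrix m m R)
    (x : m × o → R) (i : m) (k : o) :
    (blockDiagonal B *ᵥ x) (i, k) = (B k *ᵥ fun i => x (i, k)) i := by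
  simp only [mulVec, dotProduct, Fintype.sum_prod_type_right, blockDiagonal_apply]
  rw [Finset.sum_eq_single k (fun k' _ hk' => by simp [Ne.symm hk']) (by simp)]
  simp

theorem dotProduct_blockDiagonal_mulVec [NonUnitalNonAssocSemiring R] (B : o → Matrix m m R)
    (x y : m × o → R) :
    x ⬝ᵥ (blockDiagonal B *ᵥ y) = ∑ k, (fun i => x (i, k)) ⬝ᵥ (B k *ᵥ fun i => y (i, k)) := by
  rw [dotProduct, Fintype.sum_prod_type_right]
  simp only [blockDiagonal_mulVec_apply, dotProduct]

theorem dotProduct_reindex_blockDiagonal_mulVec [NonUnitalNonAssocSemiring R]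
    (B : o → Matrix m m R) (x y : o × m → R) :
    x ⬝ᵥ (reindex (.prodComm m o) (.prodComm m o) (blockDiagonal B) *ᵥ y) =
      ∑ k, (fun i => x (k, i)) ⬝ᵥ (B k *ᵥ fun i => y (k, i)) := by
  rw [reindex_apply, submatrix_mulVec_equiv, dotProduct_comp_equiv_symm,
    dotProduct_blockDiagonal_mulVec]
  rfl

theorem PosDef.blockDiagonal [RCLike 𝕜] {B : o → Matrix m m 𝕜} (hB : ∀ k, (B k).PosDef) :
    (blockDiagonal B).PosDef := by
  refine .of_dotProduct_mulVec_pos (isHermitian_blockDiagonal_iff.mpr fun k => (hB k).1)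
    fun x hx => ?_
  obtain ⟨⟨i, k⟩, hik⟩ := Function.ne_iff.mp hx
  rw [dotProduct_blockDiagonal_mulVec]
  refine Finset.sum_pos' (fun k _ => (hB k).posSemidef.dotProduct_mulVec_nonneg _)
    ⟨k, Finset.mem_univ k, (hB k).dotProduct_mulVec_pos fun h => hik (congrFun h i)⟩

theorem inv_blockDiagonal [CommRing R] [DecidableEq m] {B : o → Matrix m m R}
    (hB : ∀ k, IsUnit (B k).det) :
    (blockDiagonal B)⁻¹ = blockDiagonal fun k => (B k)⁻¹ := by
  refine inv_eq_left_inv ?_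
  rw [← blockDiagonal_mul, ← blockDiagonal_one]
  exact congrArg _ (funext fun k => nonsing_inv_mul _ (hB k))

theorem dotProduct_inv_reindex_blockDiagonal_mulVec [CommRing R] [DecidableEq m]
    {B : o → Matrix m m R} (hB : ∀ k, IsUnit (B k).det) (x y : o × m → R) :
    x ⬝ᵥ ((reindex (.prodComm m o) (.prodComm m o) (blockDiagonal B))⁻¹ *ᵥ y) =
      ∑ k, (fun i => x (k, i)) ⬝ᵥ ((B k)⁻¹ *ᵥ fun i => y (k, i)) := by
  rw [inv_reindex, inv_blockDiagonal hB, dotProduct_reindex_blockDiagonal_mulVec]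

end BlockDiagonal

end Matrix

theorem observer_initialization_general {n ny kbar : ℕ}
    (C : Matrix (Fin ny) (Fin n) ℝ)
    (Φ : Matrix (Fin n) (Fin n) ℝ)
    (ψ : Fin (kbar + 1) → Fin ny → ℝ)
    (Vt : Fin (kbar + 1) → Matrix (Fin ny) (Fin ny) ℝ)
    (hVt : ∀ k, (Vt k).PosDef)
    (Obar : Matrix (Fin (kbar + 1) × Fin ny) (Fin n) ℝ)
    (hObar : ∀ (k : Fin (kbar + 1)) (j : Fin ny) (i : Fin n),
      Obar (k, j) i = (C * (Φ⁻¹) ^ (kbar - (k : ℕ))) j i)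
    (hrank : Obar.rank = n)
    (ψbar : Fin (kbar + 1) × Fin ny → ℝ)
    (hψbar : ∀ k j, ψbar (k, j) = ψ k j)
    (Vbar : Matrix (Fin (kbar + 1) × Fin ny) (Fin (kbar + 1) × Fin ny) ℝ)
    (hVbar : ∀ k j k' j', Vbar (k, j) (k', j') =
      if k = k' then ((kbar : ℝ) + 1) * Vt k j j' else 0)
    (ξ : Fin n → ℝ)
    (hξ : ∀ k : Fin (kbar + 1),
      ((C * (Φ⁻¹) ^ (kbar - (k : ℕ))) *ᵥ ξ - ψ k) ⬝ᵥ
        ((Vt k)⁻¹ *ᵥ ((C * (Φ⁻¹) ^ (kbar - (k : ℕ))) *ᵥ ξ - ψ k)) ≤ 1) :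
    let Odag : Matrix (Fin n) (Fin (kbar + 1) × Fin ny) ℝ := (Obarᵀ * Obar)⁻¹ * Obarᵀ
    (ξ - Odag *ᵥ ψbar) ⬝ᵥ ((Odag * Vbar * Odagᵀ)⁻¹ *ᵥ (ξ - Odag *ᵥ ψbar)) ≤ 1 := by
  intro Odag
  set c : ℝ := (kbar : ℝ) + 1
  set D := reindex (.prodComm _ _) (.prodComm _ _) (blockDiagonal Vt)
  have hc : 0 < c := by positivity
  have hVbarD : Vbar = c • D := by
    ext ⟨k, j⟩ ⟨k', j'⟩
    simp [hVbar, D, blockDiagonal_apply]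
  have hgram : (Obarᵀ * Obar).PosDef := by
    simpa using PosDef.conjTranspose_mul_self Obar
      (mulVec_injective_of_rank_eq_card Obar (by simpa using hrank))
  have hleft : Odag * Obar = 1 := by
    rw [Matrix.mul_assoc, nonsing_inv_mul _ hgram.det_pos.ne'.isUnit]
  have hD : D.PosDef := (PosDef.blockDiagonal hVt).submatrix (Equiv.prodComm _ _).symm.injective
  have hresidual : ξ - Odag *ᵥ ψbar = Odag *ᵥ (Obar *ᵥ ξ - ψbar) := by
    rw [mulVec_sub, mulVec_mulVec, hleft, one_mulVec]
  have hresidual_block : ∀ k, (fun j => (Obar *ᵥ ξ - ψbar) (k, j)) =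
      (C * (Φ⁻¹) ^ (kbar - (k : ℕ))) *ᵥ ξ - ψ k := fun k => by
    ext j
    simp [mulVec, dotProduct, hObar, hψbar]
  rw [hresidual, hVbarD]
  refine ((hD.smul hc).dotProduct_inv_mulVec_le
    (vecMul_injective_of_mul_eq_one hleft) _).trans ?_
  calc (Obar *ᵥ ξ - ψbar) ⬝ᵥ ((c • D)⁻¹ *ᵥ (Obar *ᵥ ξ - ψbar))
      = c⁻¹ * ∑ k : Fin (kbar + 1), ((C * (Φ⁻¹) ^ (kbar - (k : ℕ))) *ᵥ ξ - ψ k) ⬝ᵥ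
          ((Vt k)⁻¹ *ᵥ ((C * (Φ⁻¹) ^ (kbar - (k : ℕ))) *ᵥ ξ - ψ k)) := by
        have := invertibleOfNonzero hc.ne'
        rw [Matrix.inv_smul D c hD.det_pos.ne'.isUnit, invOf_eq_inv, smul_mulVec, dotProduct_smul,
          dotProduct_inv_reindex_blockDiagonal_mulVec fun k => (hVt k).det_pos.ne'.isUnit,
          smul_eq_mul]
        simp only [hresidual_block]
    _ ≤ c⁻¹ * ∑ _k : Fin (kbar + 1), 1 := by gcongr with k; exact hξ k
    _ = 1 := by
        rw [Finset.sum_const, Finset.card_univ, Fintype.card_fin, nsmul_one, Nat.cast_succ]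
        exact inv_mul_cancel₀ hc.ne'

/-- Observer-initialization theorem (Appendix C of the paper): combining the `k̄+1`
noisy-output elliptical-cylinder constraints `CΦ^{k−k̄}ξ ∈ E(ψ̃_k, Ṽ_k)` for
`k = 0, …, k̄` yields the bounded ellipsoidal state estimate
`ξ ∈ E(Ō†ψ̄, Ō†V̄Ō†ᵀ)`, where `Ō` stacks the matrices `CΦ^{k−k̄}`, `rank(Ō) = n`,
`Ō† = (ŌᵀŌ)⁻¹Ōᵀ`, `ψ̄` stacks the `ψ̃_k`, and `V̄` is block diagonal with blocks
`(k̄+1)·Ṽ_k`. -/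
theorem observer_initialization {n ny kbar : ℕ}
    (C : Matrix (Fin ny) (Fin n) ℝ)
    (Φ : Matrix (Fin n) (Fin n) ℝ) (hΦ : IsUnit Φ.det)
    (ψ : Fin (kbar + 1) → Fin ny → ℝ)
    (Vt : Fin (kbar + 1) → Matrix (Fin ny) (Fin ny) ℝ)
    (hVt : ∀ k, (Vt k).PosDef)
    (Obar : Matrix (Fin (kbar + 1) × Fin ny) (Fin n) ℝ)
    (hObar : ∀ (k : Fin (kbar + 1)) (j : Fin ny) (i : Fin n),
      Obar (k, j) i = (C * (Φ⁻¹) ^ (kbar - (k : ℕ))) j i)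
    (hrank : Obar.rank = n)
    (ψbar : Fin (kbar + 1) × Fin ny → ℝ)
    (hψbar : ∀ k j, ψbar (k, j) = ψ k j)
    (Vbar : Matrix (Fin (kbar + 1) × Fin ny) (Fin (kbar + 1) × Fin ny) ℝ)
    (hVbar : ∀ k j k' j', Vbar (k, j) (k', j') =
      if k = k' then ((kbar : ℝ) + 1) * Vt k j j' else 0)
    (ξ : Fin n → ℝ)
    (hξ : ∀ k : Fin (kbar + 1),
      ((C * (Φ⁻¹) ^ (kbar - (k : ℕ))) *ᵥ ξ - ψ k) ⬝ᵥ
        ((Vt k)⁻¹ *ᵥ ((C * (Φ⁻¹) ^ (kbar - (k : ℕ))) *ᵥ ξ - ψ k)) ≤ 1) :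
    let Odag : Matrix (Fin n) (Fin (kbar + 1) × Fin ny) ℝ := (Obarᵀ * Obar)⁻¹ * Obarᵀ
    (ξ - Odag *ᵥ ψbar) ⬝ᵥ ((Odag * Vbar * Odagᵀ)⁻¹ *ᵥ (ξ - Odag *ᵥ ψbar)) ≤ 1 :=
  observer_initialization_general C Φ ψ Vt hVt Obar hObar hrank ψbar hψbar Vbar hVbar ξ hξ
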